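/- arXiv:1907.12965 — 2 statements merged into one kernel-verified Lean document; each statement's English description precedes it below -/
import Mathlib

section
/- If K_ij ≥ 0 for all i, j and cos(θ^e_j − θ^e_i) ≥ 0 whenever K_ij ≠ 0 (i.e. all phase differences across coupled pairs lie within [−π/2, π/2] modulo 2π), then the Hessian matrix H is positive semidefinite: xᵀ H x ≥ 0 for all x ∈ ℝ^N. -/
open Real Finset

/-- If `K i j ≥ 0` for all `i, j` and `cos (θe j − θe i) ≥ 0` whenever `K i j ≠ 0`,
then the Hessian matrix `H` is positive semidefinite: `xᵀ H x ≥ 0` for all `x`. -/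
theorem hessian_posSemidef
    (N : ℕ) (K : Fin N → Fin N → ℝ) (θe : Fin N → ℝ)
    (hK : ∀ i j, K i j = K j i)
    (hKpos : ∀ i j, 0 ≤ K i j)
    (hcos : ∀ i j, K i j ≠ 0 → 0 ≤ Real.cos (θe j - θe i))
    (H : Matrix (Fin N) (Fin N) ℝ)
    (hH : ∀ i j, H i j = if i = j
        then ∑ j' ∈ Finset.univ.erase i, K i j' * Real.cos (θe j' - θe i)
        else -(K i j * Real.cos (θe j - θe i))) :
    ∀ x : Fin N → ℝ, 0 ≤ ∑ i, ∑ j, x i * H i j * x j := by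
  intro x
  set c : Fin N → Fin N → ℝ := fun i j => K i j * Real.cos (θe j - θe i) with hc
  have hcsym : ∀ i j, c i j = c j i := by
    intro i j
    simp only [hc, hK i j]
    rw [show θe i - θe j = -(θe j - θe i) by ring, Real.cos_neg]
  have hcpos : ∀ i j, 0 ≤ c i j := by
    intro i j
    by_cases h : K i j = 0
    · simp [hc, h]
    · exact mul_nonneg (hKpos i j) (hcos i j h)
  -- swap lemma for off-diagonal double sums
  have swap : ∀ f : Fin N → Fin N → ℝ,
      (∑ i, ∑ j ∈ Finset.univ.erase i, f i j) = ∑ i, ∑ j ∈ Finset.univ.erase i, f j i := by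
    intro f
    have h1 : ∀ i : Fin N, (∑ j ∈ Finset.univ.erase i, f i j)
        = ∑ j, if j ≠ i then f i j else 0 := by
      intro i
      rw [← Finset.sum_filter]
      congr 1
      ext j
      simp [Finset.mem_erase]
    have h2 : ∀ i : Fin N, (∑ j ∈ Finset.univ.erase i, f j i)
        = ∑ j, if i ≠ j then f j i else 0 := by
      intro i
      rw [← Finset.sum_filter]
      apply Finset.sum_congr
      · ext j; simp [Finset.mem_erase, ne_comm]
      · intros; rfl
    simp_rw [h1, h2]
    rw [Finset.sum_comm]
  have hS : (∑ i, ∑ j, x i * H i j * x j)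
      = ∑ i, ∑ j ∈ Finset.univ.erase i, c i j * (x i ^ 2 - x i * x j) := by
    apply Finset.sum_congr rfl
    intro i _
    rw [← Finset.add_sum_erase _ _ (Finset.mem_univ i)]
    rw [hH i i, if_pos rfl, Finset.mul_sum, Finset.sum_mul, ← Finset.sum_add_distrib]
    apply Finset.sum_congr rfl
    intro j hj
    rw [hH i j, if_neg (Finset.ne_of_mem_erase hj).symm]
    simp only [hc]
    ring
  set S := ∑ i, ∑ j, x i * H i j * x j with hSdef
  have h2S : 2 * S = ∑ i, ∑ j ∈ Finset.univ.erase i, c i j * (x i - x j) ^ 2 := by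
    have := swap (fun i j => c i j * (x i ^ 2 - x i * x j))
    calc 2 * S = (∑ i, ∑ j ∈ Finset.univ.erase i, c i j * (x i ^ 2 - x i * x j))
        + ∑ i, ∑ j ∈ Finset.univ.erase i, c j i * (x j ^ 2 - x j * x i) := by
          rw [← this, ← hS]; ring
      _ = ∑ i, ∑ j ∈ Finset.univ.erase i, c i j * (x i - x j) ^ 2 := by
          rw [← Finset.sum_add_distrib]
          apply Finset.sum_congr rfl
          intro i _
          rw [← Finset.sum_add_distrib]
          apply Finset.sum_congr rfl
          intro j _
          rw [← hcsym i j]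
          ring
  have hpos : 0 ≤ 2 * S := by
    rw [h2S]
    apply Finset.sum_nonneg
    intro i _
    apply Finset.sum_nonneg
    intro j _
    exact mul_nonneg (hcpos i j) (sq_nonneg _)
  linarith
end

section
/- Suppose K_ij ≥ 0 for all i, j, cos(θ^e_j − θ^e_i) > 0 whenever K_ij > 0, and the graph on {1,…,N} with an edge between i and j whenever K_ij > 0 is connected. Then the kernel of the Hessian matrix H is exactly the span of the all-ones vector: xᵀ H x = 0 implies x_i = x_j for all i, j. -/
open Real Finset

/-- If `K` is nonnegative, `cos (θe j − θe i) > 0` whenever `K i j > 0`, and the graph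
with edges `{i, j | K i j > 0}` is connected, then the kernel of the Hessian `H` is
exactly the span of the all-ones vector: `xᵀ H x = 0` implies `x i = x j` for all `i, j`. -/
theorem hessian_kernel_is_ones
    (N : ℕ) (K : Fin N → Fin N → ℝ) (θe : Fin N → ℝ)
    (hK : ∀ i j, K i j = K j i)
    (hKpos : ∀ i j, 0 ≤ K i j)
    (hcos : ∀ i j, 0 < K i j → 0 < Real.cos (θe j - θe i))
    (hconn : ∀ i j : Fin N, ∃ (k : ℕ) (p : Fin (k + 1) → Fin N),
        p 0 = i ∧ p (Fin.last k) = j ∧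
        ∀ m : Fin k, 0 < K (p m.castSucc) (p m.succ))
    (H : Matrix (Fin N) (Fin N) ℝ)
    (hH : ∀ i j, H i j = if i = j
        then ∑ j' ∈ Finset.univ.erase i, K i j' * Real.cos (θe j' - θe i)
        else -(K i j * Real.cos (θe j - θe i))) :
    ∀ x : Fin N → ℝ, (∑ i, ∑ j, x i * H i j * x j = 0) → ∀ i j, x i = x j := by
  intro x hx i j
  set a : Fin N → Fin N → ℝ := fun i j => K i j * Real.cos (θe j - θe i) with ha
  have hsymm : ∀ i j, a i j = a j i := by
    intro i j
    simp only [ha]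
    rw [hK i j, ← Real.cos_neg (θe j - θe i), neg_sub]
  have hanonneg : ∀ i j, 0 ≤ a i j := by
    intro i j
    rcases lt_or_eq_of_le (hKpos i j) with h | h
    · exact le_of_lt (mul_pos h (hcos i j h))
    · simp [ha, ← h]
  -- rewrite each inner sum
  have per : ∀ i, ∑ j, x i * H i j * x j
      = ∑ j ∈ Finset.univ.erase i, a i j * (x i * (x i - x j)) := by
    intro i
    rw [← Finset.sum_erase_add _ _ (Finset.mem_univ i)]
    have h1 : x i * H i i * x i = ∑ j ∈ Finset.univ.erase i, a i j * (x i * x i) := by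
      rw [hH i i, if_pos rfl]
      rw [show x i * (∑ j' ∈ Finset.univ.erase i, K i j' * Real.cos (θe j' - θe i)) * x i
          = (∑ j' ∈ Finset.univ.erase i, K i j' * Real.cos (θe j' - θe i)) * (x i * x i) by ring]
      rw [Finset.sum_mul]
    have h2 : ∑ j ∈ Finset.univ.erase i, x i * H i j * x j
        = ∑ j ∈ Finset.univ.erase i, (-(a i j * (x i * x j))) := by
      apply Finset.sum_congr rfl
      intro j hj
      rw [hH i j, if_neg (Ne.symm (Finset.ne_of_mem_erase hj))]
      ring
    rw [h1, h2, ← Finset.sum_add_distrib]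
    apply Finset.sum_congr rfl
    intro j _
    ring
  have hS : ∑ i, ∑ j ∈ Finset.univ.erase i, a i j * (x i * (x i - x j)) = 0 := by
    rw [← hx]
    exact (Finset.sum_congr rfl fun i _ => per i).symm
  have hswap : ∑ i, ∑ j ∈ Finset.univ.erase i, a i j * (x j * (x j - x i)) = 0 := by
    rw [Finset.sum_comm' (s := Finset.univ) (t := fun i => Finset.univ.erase i)
        (t' := Finset.univ) (s' := fun j => Finset.univ.erase j)
        (by intro i j; simp [Finset.mem_erase]; exact ne_comm)]
    rw [← hS]
    apply Finset.sum_congr rfl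
    intro j _
    apply Finset.sum_congr rfl
    intro i _
    rw [hsymm i j]
  have hQ : ∑ i, ∑ j ∈ Finset.univ.erase i, a i j * (x i - x j) ^ 2 = 0 := by
    have : ∑ i, ∑ j ∈ Finset.univ.erase i, a i j * (x i - x j) ^ 2
        = (∑ i, ∑ j ∈ Finset.univ.erase i, a i j * (x i * (x i - x j)))
          + ∑ i, ∑ j ∈ Finset.univ.erase i, a i j * (x j * (x j - x i)) := by
      rw [← Finset.sum_add_distrib]
      apply Finset.sum_congr rfl
      intro i _
      rw [← Finset.sum_add_distrib]
      apply Finset.sum_congr rfl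
      intro j _
      ring
    rw [this, hS, hswap, add_zero]
  have hterm : ∀ i j, j ≠ i → a i j * (x i - x j) ^ 2 = 0 := by
    intro i j hij
    have houter := (Finset.sum_eq_zero_iff_of_nonneg (fun i _ =>
      Finset.sum_nonneg (fun j _ => mul_nonneg (hanonneg i j) (sq_nonneg _)))).mp hQ
    have hinner := (Finset.sum_eq_zero_iff_of_nonneg (fun j _ =>
      mul_nonneg (hanonneg i j) (sq_nonneg _))).mp (houter i (Finset.mem_univ i))
    exact hinner j (Finset.mem_erase.mpr ⟨hij, Finset.mem_univ j⟩)
  have hedge : ∀ i j, 0 < K i j → x i = x j := by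
    intro i j hij
    by_cases h : i = j
    · rw [h]
    · have hapos : 0 < a i j := mul_pos hij (hcos i j hij)
      have := hterm i j (fun h' => h h'.symm)
      have hsq : (x i - x j) ^ 2 = 0 := by
        rcases mul_eq_zero.mp this with h' | h'
        · exact absurd h' (ne_of_gt hapos)
        · exact h'
      have := pow_eq_zero_iff (n := 2) (by norm_num) |>.mp hsq
      linarith [sub_eq_zero.mp this]
  obtain ⟨k, p, hp0, hpl, hstep⟩ := hconn i j
  have hpath : ∀ m : Fin (k + 1), x (p 0) = x (p m) := by
    intro m
    induction m using Fin.induction with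
    | zero => rfl
    | succ m ih => rw [ih]; exact hedge _ _ (hstep m)
  have := hpath (Fin.last k)
  rw [hp0, hpl] at this
  exact this
end
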